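/- Let E be a normed vector space over ℝ, let X be a finite set with n+1 elements (n a natural number), and suppose that to every partition P of X there is assigned a continuous linear operator T_P : E → E with operator norm ‖T_P‖ ≤ 1. Then the operator A := \sum_P (-1)^{|P|-1} (|P|-1)! · T_P (sum over all partitions P of X) satisfies ‖A‖ ≤ \sum_P (|P|-1)!, and consequently ‖A‖ ≤ n! · e^{n+2}. -/

import Mathlib

/-!
By the triangle inequality the norm of the alternating sum is at most `∑ P, (|P| - 1)!`.
Labelling the `k` blocks of a partition by `Fin k` injects the pairs (partition with `k` blocks,
labelling) into the maps `X → Fin k`, so these partitions contribute at most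
`k ^ (n + 1) / k! * (k - 1)! = k ^ n ≤ n! e ^ k`; as `e ≥ 2`, summing over `1 ≤ k ≤ n + 1`
gives at most `n! e ^ (n + 2)`.
-/

open Finset

theorem norm_sum_smul_le_of_norm_le_one {ι α β : Type*} [SeminormedAddGroup α]
    [SeminormedAddCommGroup β] [SMulZeroClass α β] [IsBoundedSMul α β]
    (s : Finset ι) (c : ι → α) (v : ι → β) (hv : ∀ i ∈ s, ‖v i‖ ≤ 1) :
    ‖∑ i ∈ s, c i • v i‖ ≤ ∑ i ∈ s, ‖c i‖ :=
  (norm_sum_le _ _).trans <| sum_le_sum fun i hi =>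
    (norm_smul_le _ _).trans (mul_le_of_le_one_right (norm_nonneg _) (hv i hi))

theorem sum_Icc_pow_le_pow_succ {R : Type*} [CommSemiring R] [PartialOrder R] [IsOrderedRing R]
    {x : R} (hx : 2 ≤ x) (m : ℕ) : ∑ k ∈ Icc 1 m, x ^ k ≤ x ^ (m + 1) := by
  have hx0 : 0 ≤ x := zero_le_two.trans hx
  induction m with
  | zero => simpa using hx0
  | succ m ih =>
    rw [sum_Icc_succ_top (by omega), pow_succ x (m + 1), mul_comm _ x]
    calc ∑ k ∈ Icc 1 m, x ^ k + x ^ (m + 1) ≤ 2 * x ^ (m + 1) := by rw [two_mul]; gcongr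
      _ ≤ x * x ^ (m + 1) := by gcongr

namespace Finpartition

theorem ext_of_part_eq {α : Type*} [DecidableEq α] {s : Finset α} {P Q : Finpartition s}
    (h : ∀ x ∈ s, P.part x = Q.part x) : P = Q := by
  have parts_subset : ∀ {P Q : Finpartition s}, (∀ x ∈ s, P.part x = Q.part x) →
      ∀ t ∈ P.parts, t ∈ Q.parts := by
    intro P Q h t ht
    obtain ⟨x, hx⟩ := P.nonempty_of_mem_parts ht
    have hxs : x ∈ s := P.le ht hx
    rw [← P.part_eq_of_mem ht hx, h x hxs]
    exact Q.part_mem.mpr hxs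
  ext t
  exact ⟨parts_subset h t, parts_subset (fun x hx => (h x hx).symm) t⟩

variable {X : Type*} [Fintype X] [DecidableEq X]

def partOf (P : Finpartition (univ : Finset X)) (x : X) : P.parts :=
  ⟨P.part x, P.part_mem.mpr (mem_univ x)⟩

theorem partOf_surjective (P : Finpartition (univ : Finset X)) :
    Function.Surjective P.partOf := by
  rintro ⟨t, ht⟩
  obtain ⟨x, hx⟩ := P.nonempty_of_mem_parts ht
  exact ⟨x, Subtype.ext (P.part_eq_of_mem ht hx)⟩

theorem mem_part_iff_partOf_eq {P : Finpartition (univ : Finset X)} {x y : X} :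
    y ∈ P.part x ↔ P.partOf y = P.partOf x := by
  rw [P.mem_part_iff_part_eq_part (mem_univ y) (mem_univ x), partOf, partOf, Subtype.mk.injEq]

theorem labelling_injective (k : ℕ) :
    Function.Injective fun z : Σ P : Finpartition (univ : Finset X), P.parts ≃ Fin k =>
      z.2 ∘ z.1.partOf := by
  rintro ⟨P, σ⟩ ⟨Q, τ⟩ h
  have label_eq : ∀ x, σ (P.partOf x) = τ (Q.partOf x) := congrFun h
  have part_eq : ∀ x, P.part x = Q.part x := fun x => by
    ext y
    rw [mem_part_iff_partOf_eq, mem_part_iff_partOf_eq, ← σ.injective.eq_iff,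
      ← τ.injective.eq_iff, label_eq, label_eq]
  obtain rfl := ext_of_part_eq fun x _ => part_eq x
  obtain rfl : σ = τ := Equiv.ext fun t => by
    obtain ⟨x, rfl⟩ := P.partOf_surjective t
    exact label_eq x
  rfl

theorem card_filter_card_parts_mul_factorial_le (k : ℕ) :
    #{P : Finpartition (univ : Finset X) | #P.parts = k} * k.factorial ≤ k ^ Fintype.card X :=
  calc #{P : Finpartition (univ : Finset X) | #P.parts = k} * k.factorial
      = ∑ P : Finpartition (univ : Finset X) with #P.parts = k,
          Fintype.card (P.parts ≃ Fin k) := by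
        rw [sum_const_nat]
        intro P hP
        have hcard : Fintype.card P.parts = k := by
          rw [Fintype.card_coe]; exact (mem_filter.mp hP).2
        rw [Fintype.card_equiv (Fintype.equivFinOfCardEq hcard), hcard]
    _ ≤ ∑ P : Finpartition (univ : Finset X), Fintype.card (P.parts ≃ Fin k) :=
        sum_le_sum_of_subset (filter_subset _ _)
    _ = Fintype.card (Σ P : Finpartition (univ : Finset X), P.parts ≃ Fin k) :=
        Fintype.card_sigma.symm
    _ ≤ Fintype.card (X → Fin k) := Fintype.card_le_of_injective _ (labelling_injective k)
    _ = k ^ Fintype.card X := by simp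

theorem card_filter_card_parts_mul_factorial_pred_le {n k : ℕ} (hX : Fintype.card X = n + 1)
    (hk : k ≠ 0) :
    #{P : Finpartition (univ : Finset X) | #P.parts = k} * (k - 1).factorial ≤ k ^ n := by
  refine Nat.le_of_mul_le_mul_right ?_ (Nat.pos_of_ne_zero hk)
  calc #{P : Finpartition (univ : Finset X) | #P.parts = k} * (k - 1).factorial * k
      = #{P : Finpartition (univ : Finset X) | #P.parts = k} * k.factorial := by
        rw [← Nat.mul_factorial_pred hk]; ring
    _ ≤ k ^ n * k := by
        rw [← pow_succ, ← hX]; exact card_filter_card_parts_mul_factorial_le k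

theorem sum_factorial_pred_card_parts_le {n : ℕ} (hX : Fintype.card X = n + 1) :
    ∑ P : Finpartition (univ : Finset X), ((#P.parts - 1).factorial : ℝ)
      ≤ n.factorial * Real.exp 1 ^ (n + 2) := by
  have card_parts_mem : ∀ P : Finpartition (univ : Finset X), #P.parts ∈ Icc 1 (n + 1) := by
    intro P
    have huniv : (univ : Finset X) ≠ ⊥ := by
      rw [Finset.bot_eq_empty, ← nonempty_iff_ne_empty, ← card_pos, card_univ, hX]
      exact n.succ_pos
    have hle := P.card_parts_le_card
    rw [card_univ, hX] at hle
    exact mem_Icc.mpr ⟨card_pos.mpr (P.parts_nonempty huniv), hle⟩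
  rw [← sum_fiberwise_of_maps_to fun P _ => card_parts_mem P]
  calc ∑ k ∈ Icc 1 (n + 1), ∑ P : Finpartition (univ : Finset X) with #P.parts = k,
        ((#P.parts - 1).factorial : ℝ)
      = ∑ k ∈ Icc 1 (n + 1),
          ((#{P : Finpartition (univ : Finset X) | #P.parts = k} * (k - 1).factorial : ℕ) : ℝ) :=
        sum_congr rfl fun k _ => by
          rw [sum_congr rfl fun P hP => by rw [(mem_filter.mp hP).2], sum_const, nsmul_eq_mul]
          push_cast; rfl
    _ ≤ ∑ k ∈ Icc 1 (n + 1), (k : ℝ) ^ n := sum_le_sum fun k hk => by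
        exact_mod_cast card_filter_card_parts_mul_factorial_pred_le hX
          (by have := (mem_Icc.mp hk).1; omega)
    _ ≤ ∑ k ∈ Icc 1 (n + 1), n.factorial * Real.exp 1 ^ k := sum_le_sum fun k _ => by
        rw [Real.exp_one_pow, ← div_le_iff₀' (by positivity)]
        exact Real.pow_div_factorial_le_exp _ k.cast_nonneg n
    _ = n.factorial * ∑ k ∈ Icc 1 (n + 1), Real.exp 1 ^ k := (mul_sum _ _ _).symm
    _ ≤ n.factorial * Real.exp 1 ^ (n + 2) := by
        gcongr
        exact sum_Icc_pow_le_pow_succ (by linarith [Real.add_one_le_exp 1]) (n + 1)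

end Finpartition

/-- If `E` is a real normed vector space, `X` a finite set with `n+1` elements, and to every
partition `P` of `X` there is assigned a continuous linear operator `T P : E →L[ℝ] E` with
`‖T P‖ ≤ 1`, then the operator `A = ∑ P, (-1)^(|P|-1) * (|P|-1)! • T P` satisfies
`‖A‖ ≤ ∑ P, (|P|-1)!` and consequently `‖A‖ ≤ n! * e^(n+2)`. -/
theorem cumulant_operator_norm_le
    (E : Type*) [NormedAddCommGroup E] [NormedSpace ℝ E]
    (n : ℕ) (X : Type*) [Fintype X] [DecidableEq X] (hX : Fintype.card X = n + 1)
    (T : Finpartition (Finset.univ : Finset X) → E →L[ℝ] E)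
    (hT : ∀ P, ‖T P‖ ≤ 1) :
    ‖∑ P : Finpartition (Finset.univ : Finset X),
        ((-1 : ℝ) ^ (P.parts.card - 1) * (Nat.factorial (P.parts.card - 1) : ℝ)) • T P‖
      ≤ ∑ P : Finpartition (Finset.univ : Finset X),
          (Nat.factorial (P.parts.card - 1) : ℝ) ∧
    ‖∑ P : Finpartition (Finset.univ : Finset X),
        ((-1 : ℝ) ^ (P.parts.card - 1) * (Nat.factorial (P.parts.card - 1) : ℝ)) • T P‖
      ≤ (Nat.factorial n : ℝ) * Real.exp 1 ^ (n + 2) := by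
  have triangle := norm_sum_smul_le_of_norm_le_one univ
    (fun P : Finpartition (univ : Finset X) =>
      (-1 : ℝ) ^ (#P.parts - 1) * ((#P.parts - 1).factorial : ℝ)) T fun P _ => hT P
  simp only [norm_mul, norm_pow, norm_neg, norm_one, one_pow, one_mul,
    Real.norm_natCast] at triangle
  exact ⟨triangle, triangle.trans (Finpartition.sum_factorial_pred_card_parts_le hX)⟩
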